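/- The ring 𝒮 is a normal integral domain: 𝒮 is a domain and it is integrally closed in its field of fractions. -/

import Mathlib

/-!
The ring `𝒮` is spanned by the monomials `xᵃ yᵇ zᶜ` of nonnegative weight `2a + 2b - c`.
Substituting `x ↦ T²x`, `y ↦ T²y`, `z ↦ T⁻¹z` multiplies such a monomial by `T^(2a+2b-c)`, so `𝒮`
is the preimage of `F[T][x,y,z]` in `F[T,T⁻¹][x,y,z]`. Since `F[T]` is integrally closed in its
localization `F[T,T⁻¹]`, coefficientwise `F[T][x,y,z]` is integrally closed in `F[T,T⁻¹][x,y,z]`,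
hence `𝒮` is integrally closed in the normal domain `F[x,y,z]`, and therefore normal.
-/

open MvPolynomial

/-- The ring `𝒮`: the `F`-subalgebra of `F[x,y,z]` generated by the six monomials
`x, xz, xz², y, yz, yz²` (the variables `x, y, z` are indexed by `0, 1, 2`). -/
noncomputable def toricS (F : Type*) [CommRing F] : Subalgebra F (MvPolynomial (Fin 3) F) :=
  Algebra.adjoin F {X 0, X 0 * X 2, X 0 * X 2 ^ 2, X 1, X 1 * X 2, X 1 * X 2 ^ 2}

open LaurentPolynomial
open scoped Polynomial nonZeroDivisors

attribute [local instance] MvPolynomial.algebraMvPolynomial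

theorem isIntegrallyClosedIn_of_isLocalization {R S : Type*} [CommRing R] [CommRing S]
    [Algebra R S] [IsDomain R] [IsIntegrallyClosed R] (M : Submonoid R) (hM : M ≤ R⁰)
    [IsLocalization M S] : IsIntegrallyClosedIn R S := by
  let K := FractionRing R
  let g : S →+* K := IsLocalization.lift (M := M) (g := algebraMap R K)
    fun m => IsLocalization.map_units K (⟨m, hM m.2⟩ : R⁰)
  let := g.toAlgebra
  have : IsScalarTower R S K :=
    IsScalarTower.of_algebraMap_eq' (IsLocalization.lift_comp _).symm
  have := IsFractionRing.isFractionRing_of_isDomain_of_isLocalization M S K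
  exact AlgHom.isIntegrallyClosedIn (IsScalarTower.toAlgHom R S K) (IsFractionRing.injective S K)
    ((isIntegrallyClosed_iff_isIntegrallyClosedIn K).mp ‹_›)

theorem Subalgebra.isIntegrallyClosedIn_of_mem_iff_mem_range {R A B P : Type*} [CommRing R]
    [CommRing A] [CommRing B] [CommRing P] [Algebra R A] [Algebra P B] [IsIntegrallyClosedIn P B]
    (S : Subalgebra R A) (f : A →+* B) (hS : ∀ a, a ∈ S ↔ f a ∈ (algebraMap P B).range) :
    IsIntegrallyClosedIn S A := by
  let e : P ≃+* (algebraMap P B).range := RingEquiv.ofBijective (algebraMap P B).rangeRestrict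
    ⟨fun x y h => IsIntegralClosure.algebraMap_injective P P B (congrArg Subtype.val h),
      RingHom.rangeRestrict_surjective _⟩
  let χ : S →+* P :=
    e.symm.toRingHom.comp ((f.comp S.val.toRingHom).codRestrict _ fun s => (hS s).1 s.2)
  have hχ : (algebraMap P B).comp χ = f.comp (algebraMap S A) := by
    ext s
    exact congrArg Subtype.val (e.apply_symm_apply _)
  refine isIntegrallyClosedIn_iff.mpr ⟨Subtype.val_injective, fun {a} ha => ?_⟩
  obtain ⟨p, hp⟩ := IsIntegrallyClosedIn.isIntegral_iff.mp (ha.map_of_comp_eq χ f hχ)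
  exact ⟨⟨a, (hS a).2 ⟨p, hp⟩⟩, rfl⟩

theorem LaurentPolynomial.prod_T {R ι : Type*} [CommSemiring R] (s : Finset ι) (f : ι → ℤ) :
    ∏ i ∈ s, (T (f i) : R[T;T⁻¹]) = T (∑ i ∈ s, f i) := by
  classical
  induction s using Finset.induction_on with
  | empty => simp [T_zero]
  | insert a s ha ih => rw [Finset.prod_insert ha, Finset.sum_insert ha, ih, T_add]

theorem LaurentPolynomial.C_mul_T_mem_range_toLaurent_iff {R : Type*} [Semiring R] (r : R)
    (n : ℤ) : C r * T n ∈ Set.range (Polynomial.toLaurent (R := R)) ↔ r = 0 ∨ 0 ≤ n := by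
  constructor
  · rintro ⟨f, hf⟩
    by_contra! h
    have hsupp := support_coeff_toLaurent f
    rw [hf, support_coeff_C_mul_T_of_ne_zero h.1] at hsupp
    obtain ⟨m, -, hm⟩ := Finset.mem_map.mp (hsupp ▸ Finset.mem_singleton_self n)
    have : (0 : ℤ) ≤ m := m.cast_nonneg
    simp only [Nat.castEmbedding_apply] at hm
    omega
  · rintro (rfl | hn)
    · exact ⟨0, by simp⟩
    · refine ⟨Polynomial.C r * Polynomial.X ^ n.toNat, ?_⟩
      rw [Polynomial.toLaurent_C_mul_X_pow, Int.toNat_of_nonneg hn]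

namespace MvPolynomial

variable {σ R : Type*} [CommRing R]

theorem isIntegrallyClosedIn {S : Type*} [CommRing S] [Algebra R S] [IsIntegrallyClosedIn R S] :
    IsIntegrallyClosedIn (MvPolynomial σ R) (MvPolynomial σ S) := by
  classical
  refine isIntegrallyClosedIn_iff.mpr
    ⟨map_injective _ (IsIntegralClosure.algebraMap_injective R R S), fun {p} hp => ?_⟩
  refine mem_range_map_iff_coeffs_subset.mpr fun c hc => ?_
  obtain ⟨d, -, rfl⟩ := Finset.mem_image.mp hc
  exact IsIntegrallyClosedIn.isIntegral_iff.mp (isIntegral_iff_isIntegral_coeff.mp hp d)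

theorem mem_range_map_iff_coeff_mem_range {S : Type*} [CommRing S] (f : R →+* S)
    (p : MvPolynomial σ S) : p ∈ Set.range (map f) ↔ ∀ d, coeff d p ∈ Set.range f := by
  classical
  rw [mem_range_map_iff_coeffs_subset]
  refine ⟨fun h d => ?_, fun h c hc => ?_⟩
  · by_cases hd : d ∈ p.support
    · exact h (coeff_mem_coeffs _ (mem_support_iff.mp hd))
    · exact ⟨0, by rw [map_zero, notMem_support_iff.mp hd]⟩
  · obtain ⟨d, -, rfl⟩ := Finset.mem_image.mp hc
    exact h d

theorem X_mul_X_pow_eq_monomial (i j : σ) (e : ℕ) :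
    (X i * X j ^ e : MvPolynomial σ R) = monomial (Finsupp.single i 1 + Finsupp.single j e) 1 := by
  rw [X_pow_eq_monomial, X, monomial_mul, one_mul]

noncomputable def twistByWeight (u : σ → ℤ) : MvPolynomial σ R →ₐ[R] MvPolynomial σ R[T;T⁻¹] :=
  aeval fun i => C (T (u i)) * X i

theorem twistByWeight_monomial (u : σ → ℤ) (d : σ →₀ ℕ) (r : R) :
    twistByWeight u (monomial d r) = monomial d (LaurentPolynomial.C r * T (d.weight u)) := by
  have hpow : ∀ i k,
      (C (T (u i)) * X i : MvPolynomial σ R[T;T⁻¹]) ^ k = C (T (k • u i)) * X i ^ k :=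
    fun i k => by rw [mul_pow, ← C_pow, T_pow, nsmul_eq_mul]
  rw [twistByWeight, aeval_monomial, monomial_eq]
  simp only [Finsupp.prod, hpow, Finset.prod_mul_distrib, ← map_prod, LaurentPolynomial.prod_T,
    Finsupp.weight_apply, Finsupp.sum, C_mul, MvPolynomial.algebraMap_apply,
    ← LaurentPolynomial.C_eq_algebraMap, mul_assoc]

theorem coeff_twistByWeight (u : σ → ℤ) (p : MvPolynomial σ R) (d : σ →₀ ℕ) :
    coeff d (twistByWeight u p) = LaurentPolynomial.C (coeff d p) * T (d.weight u) := by
  classical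
  induction p using MvPolynomial.induction_on' with
  | monomial e r =>
    rw [twistByWeight_monomial, coeff_monomial, coeff_monomial]
    split_ifs with h
    · rw [h]
    · simp
  | add p q hp hq => simp only [map_add, coeff_add, hp, hq, add_mul]

theorem twistByWeight_mem_range_iff (u : σ → ℤ) (p : MvPolynomial σ R) :
    twistByWeight u p ∈ (algebraMap (MvPolynomial σ R[X]) (MvPolynomial σ R[T;T⁻¹])).range ↔
      ∀ d ∈ p.support, 0 ≤ d.weight u := by
  have hrange : Set.range (algebraMap R[X] R[T;T⁻¹]) = Set.range Polynomial.toLaurent :=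
    congrArg Set.range (_root_.funext algebraMap_eq_toLaurent)
  rw [RingHom.mem_range, ← Set.mem_range, algebraMap_def, mem_range_map_iff_coeff_mem_range]
  simp only [coeff_twistByWeight, hrange, C_mul_T_mem_range_toLaurent_iff, mem_support_iff,
    or_iff_not_imp_left]

end MvPolynomial

section toricS

variable {F : Type*} [CommRing F]

theorem toricS_eq_adjoin :
    toricS F = Algebra.adjoin F {x | ∃ i ≠ 2, ∃ e ≤ 2, x = X i * X 2 ^ e} := by
  refine congrArg _ (Set.ext fun x => ⟨?_, ?_⟩)
  · rintro (rfl | rfl | rfl | rfl | rfl | rfl)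
    exacts [⟨0, by decide, 0, by norm_num, by simp⟩, ⟨0, by decide, 1, by norm_num, by simp⟩,
      ⟨0, by decide, 2, le_rfl, rfl⟩, ⟨1, by decide, 0, by norm_num, by simp⟩,
      ⟨1, by decide, 1, by norm_num, by simp⟩, ⟨1, by decide, 2, le_rfl, rfl⟩]
  · rintro ⟨i, hi, e, he, rfl⟩
    fin_cases i <;> interval_cases e <;> simp at hi ⊢

theorem X_mul_X_two_pow_mem_toricS {i : Fin 3} (hi : i ≠ 2) {e : ℕ} (he : e ≤ 2) :
    (X i * X 2 ^ e : MvPolynomial (Fin 3) F) ∈ toricS F := by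
  rw [toricS_eq_adjoin]
  exact Algebra.subset_adjoin ⟨i, hi, e, he, rfl⟩

theorem X_pow_mul_X_two_pow_mem_toricS {i : Fin 3} (hi : i ≠ 2) {a c : ℕ} (h : c ≤ 2 * a) :
    (X i ^ a * X 2 ^ c : MvPolynomial (Fin 3) F) ∈ toricS F := by
  obtain ⟨q, r, s, rfl, rfl, hr⟩ : ∃ q r s, a = q + r + s ∧ c = 2 * q + r ∧ r ≤ 1 :=
    ⟨c / 2, c % 2, a - c / 2 - c % 2, by omega, by omega, by omega⟩
  have hfactor : (X i ^ (q + r + s) * X 2 ^ (2 * q + r) : MvPolynomial (Fin 3) F) =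
      (X i * X 2 ^ 2) ^ q * (X i * X 2 ^ 1) ^ r * (X i * X 2 ^ 0) ^ s := by
    ring
  rw [hfactor]
  exact mul_mem (mul_mem (pow_mem (X_mul_X_two_pow_mem_toricS hi le_rfl) _)
    (pow_mem (X_mul_X_two_pow_mem_toricS hi (by norm_num)) _))
    (pow_mem (X_mul_X_two_pow_mem_toricS hi (by norm_num)) _)

theorem monomial_mem_toricS {d : Fin 3 →₀ ℕ} (h : d 2 ≤ 2 * (d 0 + d 1)) (r : F) :
    monomial d r ∈ toricS F := by
  set c := min (d 2) (2 * d 0)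
  have hd : monomial d r = MvPolynomial.C r * (X 0 ^ d 0 * X 2 ^ c) *
      (X 1 ^ d 1 * X 2 ^ (d 2 - c)) := by
    have h2 : (X 2 ^ d 2 : MvPolynomial (Fin 3) F) = X 2 ^ c * X 2 ^ (d 2 - c) := by
      rw [← pow_add, Nat.add_sub_cancel' (min_le_left _ _)]
    rw [monomial_eq, Finsupp.prod_fintype _ _ (fun _ => pow_zero _), Fin.prod_univ_three, h2]
    ring
  rw [hd]
  exact mul_mem (mul_mem (Subalgebra.algebraMap_mem _ r)
    (X_pow_mul_X_two_pow_mem_toricS (by decide) (min_le_right _ _)))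
    (X_pow_mul_X_two_pow_mem_toricS (by decide) (by omega))

def toricWeight : Fin 3 → ℤ := ![2, 2, -1]

theorem weight_toricWeight (d : Fin 3 →₀ ℕ) :
    d.weight toricWeight = 2 * d 0 + 2 * d 1 - d 2 := by
  rw [Finsupp.weight_apply, Finsupp.sum_fintype _ _ (fun i => zero_smul ℕ (toricWeight i)),
    Fin.sum_univ_three]
  simp only [toricWeight, Matrix.cons_val_zero, Matrix.cons_val_one, Matrix.cons_val, nsmul_eq_mul]
  ring

theorem twistByWeight_X_mul_X_two_pow_mem_range {i : Fin 3} (hi : i ≠ 2) {e : ℕ} (he : e ≤ 2) :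
    twistByWeight toricWeight (X i * X 2 ^ e : MvPolynomial (Fin 3) F) ∈
      (algebraMap (MvPolynomial (Fin 3) F[X]) (MvPolynomial (Fin 3) F[T;T⁻¹])).range := by
  rw [X_mul_X_pow_eq_monomial, twistByWeight_mem_range_iff]
  intro d hd
  rw [Finset.mem_singleton.mp (support_monomial_subset hd), weight_toricWeight]
  fin_cases i <;> simp at hi ⊢ <;> omega

theorem mem_toricS_iff_twistByWeight_mem_range (p : MvPolynomial (Fin 3) F) :
    p ∈ toricS F ↔ twistByWeight toricWeight p ∈
      (algebraMap (MvPolynomial (Fin 3) F[X]) (MvPolynomial (Fin 3) F[T;T⁻¹])).range := by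
  refine ⟨fun hp => ?_, fun hp => ?_⟩
  · rw [toricS_eq_adjoin] at hp
    induction hp using Algebra.adjoin_induction with
    | mem x hx =>
      obtain ⟨i, hi, e, he, rfl⟩ := hx
      exact twistByWeight_X_mul_X_two_pow_mem_range hi he
    | algebraMap r => exact ⟨MvPolynomial.C (Polynomial.C r), by simp [twistByWeight]⟩
    | add x y _ _ hx hy => rw [map_add]; exact add_mem hx hy
    | mul x y _ _ hx hy => rw [map_mul]; exact mul_mem hx hy
  · rw [twistByWeight_mem_range_iff] at hp
    rw [p.as_sum]
    refine Subalgebra.sum_mem _ fun d hd => monomial_mem_toricS ?_ _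
    have := hp d hd
    rw [weight_toricWeight] at this
    omega

end toricS

theorem toricS_isDomain_and_integrallyClosed_general (F : Type*) [Field F] :
    IsDomain (toricS F) ∧ IsIntegrallyClosed (toricS F) := by
  refine ⟨inferInstance, ?_⟩
  have : IsIntegrallyClosedIn F[X] F[T;T⁻¹] :=
    isIntegrallyClosedIn_of_isLocalization (Submonoid.powers Polynomial.X)
      (powers_le_nonZeroDivisors_of_noZeroDivisors Polynomial.X_ne_zero)
  have : IsIntegrallyClosedIn (MvPolynomial (Fin 3) F[X]) (MvPolynomial (Fin 3) F[T;T⁻¹]) :=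
    MvPolynomial.isIntegrallyClosedIn
  have : IsIntegrallyClosedIn (toricS F) (MvPolynomial (Fin 3) F) :=
    (toricS F).isIntegrallyClosedIn_of_mem_iff_mem_range (twistByWeight toricWeight).toRingHom
      mem_toricS_iff_twistByWeight_mem_range
  exact .of_isIntegrallyClosed_of_isIntegrallyClosedIn _ (MvPolynomial (Fin 3) F)

/-- The ring `𝒮 = F[x, xz, xz², y, yz, yz²]` is a normal integral domain: it is a domain and
it is integrally closed in its field of fractions. -/
theorem toricS_isDomain_and_integrallyClosed (ℓ : ℕ) (hℓ : ℓ.Prime) (hℓ2 : 2 < ℓ)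
    (F : Type*) [Field F] [Fintype F] [CharP F ℓ] :
    IsDomain (toricS F) ∧ IsIntegrallyClosed (toricS F) :=
  toricS_isDomain_and_integrallyClosed_general F
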